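/- Stream partial derivatives agree with classical partial derivatives at the initial point: let K be a field of characteristic 0 and p a polynomial in the variables x, y₁, ..., yₙ with coefficients in K. Then there exist polynomials q₀, q₁, ..., qₙ in the variables x, y₀₁,...,y₀ₙ, y₁,...,yₙ with coefficients in K such that (i) for every tuple of streams σ over K, writing r₀ = (σ₁(0),...,σₙ(0)), one has (p(X, σ))' = q₀(X, r₀, σ) + Σᵢ₌₁ⁿ qᵢ(X, r₀, σ) · σᵢ'; and (ii) for every r₀ ∈ Kⁿ and every i = 1,...,n, qᵢ(0, r₀, r₀) = (∂p/∂yᵢ)(0, r₀), where ∂p/∂yᵢ is the formal partial derivative of p with respect to yᵢ. -/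

import Mathlib

/-- Stream derivative: remove the first coefficient. -/
noncomputable def sderiv {K : Type*} [Field K] (σ : PowerSeries K) : PowerSeries K :=
  PowerSeries.mk fun k => PowerSeries.coeff (k + 1) σ

/-- Variable set `x, y₀₁,...,y₀ₙ, y₁,...,yₙ`. -/
abbrev VarV (n : ℕ) := Unit ⊕ (Fin n ⊕ Fin n)

/-- Evaluation of a polynomial in `x, y₁, ..., yₙ` (variable `0` playing the role of `x`)
at `x := X` and `yᵢ := σᵢ`. -/
noncomputable def polyEval {K : Type*} [Field K] {n : ℕ}
    (p : MvPolynomial (Fin (n + 1)) K) (σ : Fin n → PowerSeries K) : PowerSeries K :=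
  MvPolynomial.aeval (Fin.cons PowerSeries.X σ) p

/-- Evaluation of a polynomial in `x, y₀, y` at `x := X`, `y₀ᵢ := C r₀ᵢ`, `yᵢ := σᵢ`. -/
noncomputable def evalV {K : Type*} [Field K] {n : ℕ}
    (q : MvPolynomial (VarV n) K) (r0 : Fin n → K) (σ : Fin n → PowerSeries K) :
    PowerSeries K :=
  MvPolynomial.aeval
    (Sum.elim (fun _ => PowerSeries.X)
      (Sum.elim (fun i => PowerSeries.C (r0 i)) σ)) q

/-- Evaluation of a polynomial in `x, y₀, y` at `x := 0`, `y₀ᵢ := r₀ᵢ`, `yᵢ := r₀ᵢ`. -/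
noncomputable def evalVK {K : Type*} [Field K] {n : ℕ}
    (q : MvPolynomial (VarV n) K) (r0 : Fin n → K) : K :=
  MvPolynomial.eval (Sum.elim (fun _ => (0 : K)) (Sum.elim r0 r0)) q

/-!
The polynomials `p` for which suitable `q₀, qᵢ` exist contain the constants and the variables and
are closed under sums and products: the Leibniz rule `(στ)' = σ'τ + σ(0)τ'` for the stream
derivative (read off from `σ = σ(0) + Xσ'`) gives
`qᵢ(pp') = qᵢ(p)·p' + p(0, y₀)·qᵢ(p')`, which at `x = 0`, `y = y₀` is the product rule for `∂/∂yᵢ`.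
-/

section StreamCalculus

open PowerSeries

variable {K : Type*} [Field K]

lemma X_mul_sderiv (σ : K⟦X⟧) : X * sderiv σ = σ - C (coeff 0 σ) := by
  ext (_ | k)
  · simp
  · simp [coeff_succ_X_mul, sderiv]

lemma sderiv_add (σ τ : K⟦X⟧) : sderiv (σ + τ) = sderiv σ + sderiv τ := by
  ext; simp [sderiv]

lemma sderiv_C (a : K) : sderiv (C a) = 0 := by
  ext; simp [sderiv]

lemma sderiv_X : sderiv (X : K⟦X⟧) = 1 := by
  ext; simp [sderiv, coeff_X, coeff_one]

lemma sderiv_mul (σ τ : K⟦X⟧) : sderiv (σ * τ) = sderiv σ * τ + C (coeff 0 σ) * sderiv τ := by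
  apply mul_left_cancel₀ (X_ne_zero (R := K))
  rw [X_mul_sderiv, mul_add, ← mul_assoc, X_mul_sderiv, mul_left_comm, X_mul_sderiv,
    coeff_zero_eq_constantCoeff, map_mul, ← coeff_zero_eq_constantCoeff, map_mul]
  ring

end StreamCalculus

section Evaluation

open MvPolynomial

variable {K : Type*} [Field K] {n : ℕ}

lemma polyEval_add (p p' : MvPolynomial (Fin (n + 1)) K) (σ : Fin n → PowerSeries K) :
    polyEval (p + p') σ = polyEval p σ + polyEval p' σ :=
  map_add _ p p'

lemma polyEval_mul (p p' : MvPolynomial (Fin (n + 1)) K) (σ : Fin n → PowerSeries K) :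
    polyEval (p * p') σ = polyEval p σ * polyEval p' σ :=
  map_mul _ p p'

lemma coeff_zero_polyEval (p : MvPolynomial (Fin (n + 1)) K) (σ : Fin n → PowerSeries K) :
    PowerSeries.coeff 0 (polyEval p σ) =
      eval (Fin.cons 0 fun i => PowerSeries.coeff 0 (σ i)) p := by
  rw [polyEval, PowerSeries.coeff_zero_eq_constantCoeff, map_aeval]
  congr 2
  ext j
  refine Fin.cases ?_ (fun i => ?_) j <;> simp

/-- `p(x, y)` as a polynomial in the variables `x, y` of `VarV n`. -/
noncomputable def liftY (p : MvPolynomial (Fin (n + 1)) K) : MvPolynomial (VarV n) K :=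
  rename (Fin.cons (Sum.inl ()) (Sum.inr ∘ Sum.inr)) p

/-- `p(0, y₀)` as a polynomial in the variables `y₀` of `VarV n`. -/
noncomputable def liftInit (p : MvPolynomial (Fin (n + 1)) K) : MvPolynomial (VarV n) K :=
  aeval (Fin.cons 0 (X ∘ Sum.inr ∘ Sum.inl)) p

variable (r0 : Fin n → K) (σ : Fin n → PowerSeries K)

@[simp] lemma evalV_add (a b : MvPolynomial (VarV n) K) :
    evalV (a + b) r0 σ = evalV a r0 σ + evalV b r0 σ :=
  map_add _ a b

@[simp] lemma evalV_mul (a b : MvPolynomial (VarV n) K) :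
    evalV (a * b) r0 σ = evalV a r0 σ * evalV b r0 σ :=
  map_mul _ a b

@[simp] lemma evalVK_add (a b : MvPolynomial (VarV n) K) :
    evalVK (a + b) r0 = evalVK a r0 + evalVK b r0 :=
  map_add _ a b

@[simp] lemma evalVK_mul (a b : MvPolynomial (VarV n) K) :
    evalVK (a * b) r0 = evalVK a r0 * evalVK b r0 :=
  map_mul _ a b

@[simp] lemma evalV_liftY (p : MvPolynomial (Fin (n + 1)) K) :
    evalV (liftY p) r0 σ = polyEval p σ := by
  rw [evalV, liftY, aeval_rename, Fin.comp_cons]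
  rfl

@[simp] lemma evalVK_liftY (p : MvPolynomial (Fin (n + 1)) K) :
    evalVK (liftY p) r0 = eval (Fin.cons 0 r0) p := by
  rw [evalVK, liftY, eval_rename, Fin.comp_cons]
  rfl

@[simp] lemma evalV_liftInit (p : MvPolynomial (Fin (n + 1)) K) :
    evalV (liftInit p) r0 σ = PowerSeries.C (eval (Fin.cons 0 r0) p) := by
  rw [evalV, liftInit, comp_aeval_apply, ← PowerSeries.algebraMap_eq, ← aeval_eq_eval,
    ← aeval_algebraMap_apply, Fin.comp_cons]
  congr 2
  ext j
  refine Fin.cases ?_ (fun i => ?_) j <;> simp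

@[simp] lemma evalVK_liftInit (p : MvPolynomial (Fin (n + 1)) K) :
    evalVK (liftInit p) r0 = eval (Fin.cons 0 r0) p := by
  rw [evalVK, liftInit, ← aeval_eq_eval, comp_aeval_apply, aeval_eq_eval]
  congr 2
  ext j
  refine Fin.cases ?_ (fun i => ?_) j <;> simp

end Evaluation

section StreamPartials

open MvPolynomial

variable {K : Type*} [Field K] {n : ℕ}

def HasStreamPartials (p : MvPolynomial (Fin (n + 1)) K) : Prop :=
  ∃ (q0 : MvPolynomial (VarV n) K) (q : Fin n → MvPolynomial (VarV n) K),
    (∀ σ : Fin n → PowerSeries K,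
      sderiv (polyEval p σ) =
        evalV q0 (fun i => PowerSeries.coeff 0 (σ i)) σ +
        ∑ i, evalV (q i) (fun j => PowerSeries.coeff 0 (σ j)) σ * sderiv (σ i)) ∧
    (∀ (r0 : Fin n → K) (i : Fin n),
      evalVK (q i) r0 = eval (Fin.cons 0 r0) (pderiv i.succ p))

lemma hasStreamPartials_C (a : K) : HasStreamPartials (C a : MvPolynomial (Fin (n + 1)) K) := by
  refine ⟨0, 0, fun σ => ?_, fun r0 i => ?_⟩
  · simp [polyEval, evalV, sderiv_C]
  · simp [evalVK]

lemma hasStreamPartials_X_zero : HasStreamPartials (X 0 : MvPolynomial (Fin (n + 1)) K) := by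
  refine ⟨1, 0, fun σ => ?_, fun r0 i => ?_⟩
  · simp [polyEval, evalV, sderiv_X]
  · simp [evalVK, pderiv_X_of_ne (Fin.succ_ne_zero i).symm]

lemma hasStreamPartials_X_succ (j : Fin n) :
    HasStreamPartials (X j.succ : MvPolynomial (Fin (n + 1)) K) := by
  classical
  refine ⟨0, Pi.single j 1, fun σ => ?_, fun r0 i => ?_⟩
  · simp [polyEval, evalV, Pi.single_apply]
  · simp [evalVK, pderiv_X, Pi.single_apply, eq_comm]

lemma HasStreamPartials.add {p p' : MvPolynomial (Fin (n + 1)) K} (hp : HasStreamPartials p)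
    (hp' : HasStreamPartials p') : HasStreamPartials (p + p') := by
  obtain ⟨q0, q, hq, hq_init⟩ := hp
  obtain ⟨q0', q', hq', hq'_init⟩ := hp'
  refine ⟨q0 + q0', fun i => q i + q' i, fun σ => ?_, fun r0 i => ?_⟩
  · rw [polyEval_add, sderiv_add, hq, hq']
    simp only [evalV_add, add_mul, Finset.sum_add_distrib]
    ring
  · simp [hq_init, hq'_init]

lemma HasStreamPartials.mul {p p' : MvPolynomial (Fin (n + 1)) K} (hp : HasStreamPartials p)
    (hp' : HasStreamPartials p') : HasStreamPartials (p * p') := by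
  obtain ⟨q0, q, hq, hq_init⟩ := hp
  obtain ⟨q0', q', hq', hq'_init⟩ := hp'
  refine ⟨q0 * liftY p' + liftInit p * q0', fun i => q i * liftY p' + liftInit p * q' i,
    fun σ => ?_, fun r0 i => ?_⟩
  · rw [polyEval_mul, sderiv_mul, hq, hq', coeff_zero_polyEval]
    simp only [evalV_add, evalV_mul, evalV_liftY, evalV_liftInit, add_mul, mul_add,
      Finset.sum_add_distrib, Finset.sum_mul, Finset.mul_sum]
    ring_nf
  · simp [hq_init, hq'_init]
    ring

end StreamPartials

theorem stream_partial_deriv_agrees_classical_general {K : Type*} [Field K] {n : ℕ}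
    (p : MvPolynomial (Fin (n + 1)) K) :
    ∃ (q0 : MvPolynomial (VarV n) K) (q : Fin n → MvPolynomial (VarV n) K),
      (∀ σ : Fin n → PowerSeries K,
        sderiv (polyEval p σ) =
          evalV q0 (fun i => PowerSeries.coeff 0 (σ i)) σ +
          ∑ i, evalV (q i) (fun j => PowerSeries.coeff 0 (σ j)) σ * sderiv (σ i)) ∧
      (∀ (r0 : Fin n → K) (i : Fin n),
        evalVK (q i) r0 =
          MvPolynomial.eval (Fin.cons 0 r0) (MvPolynomial.pderiv i.succ p)) := by
  suffices h : HasStreamPartials p from h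
  induction p using MvPolynomial.induction_on with
  | C a => exact hasStreamPartials_C a
  | add p p' hp hp' => exact hp.add hp'
  | mul_X p j hp => exact hp.mul (Fin.cases hasStreamPartials_X_zero hasStreamPartials_X_succ j)

/-- Stream partial derivatives agree with classical partial derivatives at the
initial point. -/
theorem stream_partial_deriv_agrees_classical {K : Type*} [Field K] [CharZero K] {n : ℕ}
    (p : MvPolynomial (Fin (n + 1)) K) :
    ∃ (q0 : MvPolynomial (VarV n) K) (q : Fin n → MvPolynomial (VarV n) K),
      (∀ σ : Fin n → PowerSeries K,
        sderiv (polyEval p σ) =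
          evalV q0 (fun i => PowerSeries.coeff 0 (σ i)) σ +
          ∑ i, evalV (q i) (fun j => PowerSeries.coeff 0 (σ j)) σ * sderiv (σ i)) ∧
      (∀ (r0 : Fin n → K) (i : Fin n),
        evalVK (q i) r0 =
          MvPolynomial.eval (Fin.cons 0 r0) (MvPolynomial.pderiv i.succ p)) :=
  stream_partial_deriv_agrees_classical_general p
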